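/- For the min s-t cut function f(w) = argmin over assignments y ∈ {−1,1}^n with y_s = 1, y_t = −1 of ∑_{i<j} w_{ij}(1 − y_i y_j) (assumed unique), the edge set S = {{u,v} : u ∈ {s,t}, v ∉ {s,t}} is a dominating set of sensitivity 2: for any neighboring weight vectors w, w' differing by at most 1 on a single edge, there exists a ∈ ℝ^S with ‖a‖₁ ≤ 2, depending only on f(w) and w' − w, such that f restricted to (w'|_S + a, w'|_{S^c}) equals f(w). -/

import Mathlib

/-!
Write `w' = w + δ • 1_{e₀}` with `|δ| ≤ 1`. Cut costs are linear in the weights, so if `y₀` also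
minimises the cost of the perturbation `g = δ • 1_{e₀} + a` among `s`-`t` cuts, it stays the
unique minimum cut for `w' + a = w + g`. If `e₀` is a terminal edge, take `a = -δ • 1_{e₀}`. If `e₀`
is a loop or `{s, t}`, every `s`-`t` cut pays the same for it and `a = 0`. If `e₀ = {u, v}` joins
two non-terminals, `a` puts `-δ` on the edges tying `u` and `v` to a terminal: for `δ ≥ 0` the
terminal on the other `y₀`-side, for `δ < 0` the one on the same side. Then `y₀` is optimal for
`g`, by a check over the colours of `u` and `v`, and `‖a‖₁ ≤ 2 |δ| ≤ 2`.
-/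

open Finset

/-- Cost of an `s`-`t` cut given by a two-coloring `y` on weights indexed by unordered pairs. -/
noncomputable def stCost (n : ℕ) (w : Sym2 (Fin n) → ℝ) (y : Fin n → Bool) : ℝ :=
  (1 / 2) * ∑ u : Fin n, ∑ v : Fin n, if y u ≠ y v then w (s(u, v)) else 0

/-- Neighboring weight vectors: they differ on at most one edge, by at most one. -/
def NeighboringW (n : ℕ) (w w' : Sym2 (Fin n) → ℝ) : Prop :=
  ∃ e₀, (∀ e, e ≠ e₀ → w' e = w e) ∧ |w' e₀ - w e₀| ≤ 1

/-- Edges between a terminal in `{s, t}` and a non-terminal. -/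
def terminalEdges (n : ℕ) (s t : Fin n) : Set (Sym2 (Fin n)) :=
  {e | ∃ v, v ≠ s ∧ v ≠ t ∧ (e = s(s, v) ∨ e = s(t, v))}

section

variable {n : ℕ}

lemma stCost_add (w g : Sym2 (Fin n) → ℝ) (y : Fin n → Bool) :
    stCost n (w + g) y = stCost n w y + stCost n g y := by
  simp only [stCost, ← mul_add, ← sum_add_distrib, Pi.add_apply]
  congr! 3 with u v
  split_ifs <;> simp

lemma stCost_zero (y : Fin n → Bool) : stCost n 0 y = 0 := by
  simp [stCost]

lemma stCost_single (u v : Fin n) (c : ℝ) (y : Fin n → Bool) :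
    stCost n (Pi.single s(u, v) c) y = if y u = y v then 0 else c := by
  classical
  unfold stCost
  rw [← Fintype.sum_prod_type']
  split_ifs with huv
  · refine mul_eq_zero_of_right _ (sum_eq_zero fun p _ => ?_)
    rw [ite_eq_right_iff]
    intro hp
    rw [Pi.single_apply, ite_eq_right_iff, Sym2.eq_iff]
    rintro (⟨rfl, rfl⟩ | ⟨rfl, rfl⟩) <;> simp_all
  · have hne : (u, v) ≠ (v, u) := by rintro ⟨⟩; exact huv rfl
    rw [sum_eq_add (u, v) (v, u) hne _ (by simp) (by simp)]
    · simp [Sym2.eq_swap, huv, Ne.symm huv]; ring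
    · rintro ⟨a, b⟩ - ⟨h1, h2⟩
      have hab : s(a, b) ≠ s(u, v) := by
        rw [Ne, Sym2.eq_iff]; rintro (⟨rfl, rfl⟩ | ⟨rfl, rfl⟩) <;> simp_all
      simp [hab]

def IsUniqueMinCut (n : ℕ) (s t : Fin n) (w : Sym2 (Fin n) → ℝ) (y₀ : Fin n → Bool) : Prop :=
  (∀ y : Fin n → Bool, y s = true → y t = false → stCost n w y₀ ≤ stCost n w y) ∧
  (∀ y : Fin n → Bool, y s = true → y t = false → stCost n w y = stCost n w y₀ → y = y₀)

lemma IsUniqueMinCut.add {s t : Fin n} {w g : Sym2 (Fin n) → ℝ} {y₀ : Fin n → Bool}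
    (hw : IsUniqueMinCut n s t w y₀)
    (hg : ∀ y : Fin n → Bool, y s = true → y t = false → stCost n g y₀ ≤ stCost n g y) :
    IsUniqueMinCut n s t (w + g) y₀ := by
  refine ⟨fun y hs ht => ?_, fun y hs ht heq => hw.2 y hs ht ?_⟩
  · simp only [stCost_add]
    linarith [hw.1 y hs ht, hg y hs ht]
  · simp only [stCost_add] at heq
    linarith [hw.1 y hs ht, hg y hs ht]

noncomputable def anchor (s t : Fin n) (y₀ : Fin n → Bool) (δ : ℝ) (x : Fin n) : Fin n :=
  if 0 ≤ δ then (if y₀ x then t else s) else (if y₀ x then s else t)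

lemma mk_anchor_mem_terminalEdges {s t : Fin n} (y₀ : Fin n → Bool) (δ : ℝ) {x : Fin n}
    (hs : x ≠ s) (ht : x ≠ t) : s(anchor s t y₀ δ x, x) ∈ terminalEdges n s t := by
  refine ⟨x, hs, ht, ?_⟩
  unfold anchor
  split_ifs <;> simp

lemma apply_anchor {s t : Fin n} {y : Fin n → Bool} (hs : y s = true) (ht : y t = false)
    (y₀ : Fin n → Bool) (δ : ℝ) (x : Fin n) :
    y (anchor s t y₀ δ x) = if 0 ≤ δ then !y₀ x else y₀ x := by
  unfold anchor
  split_ifs <;> simp_all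

open Classical in
noncomputable def edgeCorrection (s t : Fin n) (y₀ : Fin n → Bool) (δ : ℝ) :
    Sym2 (Fin n) → Sym2 (Fin n) → ℝ :=
  Sym2.lift ⟨fun u v =>
    if s(u, v) ∈ terminalEdges n s t then Pi.single s(u, v) (-δ)
    else if u ≠ v ∧ u ≠ s ∧ u ≠ t ∧ v ≠ s ∧ v ≠ t then
      Pi.single s(anchor s t y₀ δ u, u) (-δ) + Pi.single s(anchor s t y₀ δ v, v) (-δ)
    else 0, fun u v => by
      simp only [Sym2.eq_swap (a := u), ne_comm (a := u) (b := v)]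
      split_ifs <;> first | rfl | exact add_comm _ _ | tauto⟩

lemma edgeCorrection_zero (s t : Fin n) (y₀ : Fin n → Bool) (e : Sym2 (Fin n)) :
    edgeCorrection s t y₀ 0 e = 0 := by
  induction e using Sym2.ind with
  | _ u v => simp [edgeCorrection]

lemma edgeCorrection_eq_zero_of_not_mem {s t : Fin n} (y₀ : Fin n → Bool) (δ : ℝ)
    (e₀ : Sym2 (Fin n)) {e : Sym2 (Fin n)} (he : e ∉ terminalEdges n s t) :
    edgeCorrection s t y₀ δ e₀ e = 0 := by
  induction e₀ using Sym2.ind with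
  | _ u v =>
    simp only [edgeCorrection, Sym2.lift_mk]
    split_ifs with hterm hinner
    · exact Pi.single_eq_of_ne (ne_of_mem_of_not_mem hterm he).symm _
    · obtain ⟨-, hus, hut, hvs, hvt⟩ := hinner
      have hne {x : Fin n} (hxs : x ≠ s) (hxt : x ≠ t) : e ≠ s(anchor s t y₀ δ x, x) :=
        (ne_of_mem_of_not_mem (mk_anchor_mem_terminalEdges y₀ δ hxs hxt) he).symm
      rw [Pi.add_apply, Pi.single_eq_of_ne (hne hus hut), Pi.single_eq_of_ne (hne hvs hvt),
        add_zero]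
    · rfl

lemma sum_abs_single {α : Type*} [Fintype α] [DecidableEq α] (a : α) (c : ℝ) :
    ∑ e, |Pi.single a c e| = |c| := by
  simp [Pi.single_apply, apply_ite]

lemma sum_abs_edgeCorrection_le (s t : Fin n) (y₀ : Fin n → Bool) (δ : ℝ) (e₀ : Sym2 (Fin n)) :
    ∑ e, |edgeCorrection s t y₀ δ e₀ e| ≤ 2 * |δ| := by
  induction e₀ using Sym2.ind with
  | _ u v =>
    simp only [edgeCorrection, Sym2.lift_mk]
    split_ifs
    · rw [sum_abs_single, abs_neg]
      linarith [abs_nonneg δ]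
    · simp only [Pi.add_apply]
      refine (sum_le_sum fun e _ => abs_add_le _ _).trans ?_
      rw [sum_add_distrib, sum_abs_single, sum_abs_single, abs_neg, two_mul]
    · simp [abs_nonneg]

lemma anchor_cost_le (δ : ℝ) (p q p' q' : Bool) :
    (if p = q then 0 else δ) + ((if (if 0 ≤ δ then !p else p) = p then 0 else -δ) +
        (if (if 0 ≤ δ then !q else q) = q then 0 else -δ)) ≤
      (if p' = q' then 0 else δ) + ((if (if 0 ≤ δ then !p else p) = p' then 0 else -δ) +
        (if (if 0 ≤ δ then !q else q) = q' then 0 else -δ)) := by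
  by_cases hδ : 0 ≤ δ <;> cases p <;> cases q <;> cases p' <;> cases q' <;> simp [hδ] <;> linarith

lemma apply_eq_apply_iff_of_not_mem_terminalEdges {s t u v : Fin n}
    (hterm : s(u, v) ∉ terminalEdges n s t) (hinner : ¬(u ≠ v ∧ u ≠ s ∧ u ≠ t ∧ v ≠ s ∧ v ≠ t))
    {y : Fin n → Bool} (hs : y s = true) (ht : y t = false) : y u = y v ↔ u = v := by
  by_cases huv : u = v
  · simp [huv]
  have hu : u = s ∨ u = t := by
    by_contra! hu
    have hv : v = s ∨ v = t := by tauto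
    exact hterm ⟨u, hu.1, hu.2, by rcases hv with rfl | rfl <;> simp [Sym2.eq_swap]⟩
  have hv : v = s ∨ v = t := by
    by_contra! hv
    exact hterm ⟨v, hv.1, hv.2, by rcases hu with rfl | rfl <;> simp⟩
  rcases hu with rfl | rfl <;> rcases hv with rfl | rfl <;> simp_all

lemma stCost_single_add_edgeCorrection_le {s t : Fin n} {y₀ y : Fin n → Bool}
    (hs₀ : y₀ s = true) (ht₀ : y₀ t = false) (hs : y s = true) (ht : y t = false)
    (δ : ℝ) (e₀ : Sym2 (Fin n)) :
    stCost n (Pi.single e₀ δ + edgeCorrection s t y₀ δ e₀) y₀ ≤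
      stCost n (Pi.single e₀ δ + edgeCorrection s t y₀ δ e₀) y := by
  induction e₀ using Sym2.ind with
  | _ u v =>
    simp only [edgeCorrection, Sym2.lift_mk]
    split_ifs with hterm hinner
    · rw [← Pi.single_add, add_neg_cancel, Pi.single_zero, stCost_zero, stCost_zero]
    · simp only [stCost_add, stCost_single, apply_anchor hs₀ ht₀, apply_anchor hs ht]
      exact anchor_cost_le δ _ _ _ _
    · have hcut {y : Fin n → Bool} (hs : y s = true) (ht : y t = false) : y u = y v ↔ u = v :=
        apply_eq_apply_iff_of_not_mem_terminalEdges hterm hinner hs ht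
      rw [add_zero, stCost_single, stCost_single, if_congr (hcut hs₀ ht₀) rfl rfl,
        if_congr (hcut hs ht) rfl rfl]

lemma NeighboringW.exists_eq_add_single {w w' : Sym2 (Fin n) → ℝ} (h : NeighboringW n w w') :
    ∃ e₀ δ, |δ| ≤ 1 ∧ w' = w + Pi.single e₀ δ := by
  obtain ⟨e₀, hsame, hδ⟩ := h
  refine ⟨e₀, w' e₀ - w e₀, hδ, funext fun e => ?_⟩
  rcases eq_or_ne e e₀ with rfl | he
  · simp
  · simp [hsame e he, Pi.single_eq_of_ne he]

/-- Summing over all edges avoids choosing the changed one: the others have `δ = 0` and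
contribute nothing. -/
noncomputable def correction (s t : Fin n) (p : (Fin n → Bool) × (Sym2 (Fin n) → ℝ)) :
    Sym2 (Fin n) → ℝ :=
  ∑ e, edgeCorrection s t p.1 (p.2 e) e

lemma correction_single (s t : Fin n) (y₀ : Fin n → Bool) (e₀ : Sym2 (Fin n)) (δ : ℝ) :
    correction s t (y₀, Pi.single e₀ δ) = edgeCorrection s t y₀ δ e₀ := by
  simp only [correction]
  rw [sum_eq_single e₀ (fun e _ he => by
    rw [Pi.single_eq_of_ne he, edgeCorrection_zero]) (by simp)]
  simp

end

theorem stcut_dominating_set_general (n : ℕ) (s t : Fin n) :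
    ∃ A : (Fin n → Bool) × (Sym2 (Fin n) → ℝ) → (Sym2 (Fin n) → ℝ),
      ∀ w w' : Sym2 (Fin n) → ℝ, (∀ e, 0 ≤ w e) → (∀ e, 0 ≤ w' e) →
        NeighboringW n w w' →
        ∀ y₀ : Fin n → Bool, y₀ s = true → y₀ t = false →
        (∀ y : Fin n → Bool, y s = true → y t = false →
          stCost n w y₀ ≤ stCost n w y) →
        (∀ y : Fin n → Bool, y s = true → y t = false →
          stCost n w y = stCost n w y₀ → y = y₀) →
        (∀ e, e ∉ terminalEdges n s t → A (y₀, w' - w) e = 0) ∧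
        (∑ e : Sym2 (Fin n), |A (y₀, w' - w) e| ≤ 2) ∧
        (∀ y : Fin n → Bool, y s = true → y t = false →
          stCost n (fun e => w' e + A (y₀, w' - w) e) y₀
            ≤ stCost n (fun e => w' e + A (y₀, w' - w) e) y) ∧
        (∀ y : Fin n → Bool, y s = true → y t = false →
          stCost n (fun e => w' e + A (y₀, w' - w) e) y
            = stCost n (fun e => w' e + A (y₀, w' - w) e) y₀ → y = y₀) := by
  refine ⟨correction s t, fun w w' _ _ hN y₀ hs₀ ht₀ hmin huniq => ?_⟩
  obtain ⟨e₀, δ, hδ, rfl⟩ := hN.exists_eq_add_single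
  set a := edgeCorrection s t y₀ δ e₀
  have hA : correction s t (y₀, w + Pi.single e₀ δ - w) = a := by
    rw [add_sub_cancel_left, correction_single]
  have hw : (fun e => (w + Pi.single e₀ δ : Sym2 (Fin n) → ℝ) e + a e) =
      w + (Pi.single e₀ δ + a) :=
    add_assoc _ _ _
  have hunique : IsUniqueMinCut n s t (w + (Pi.single e₀ δ + a)) y₀ :=
    IsUniqueMinCut.add ⟨hmin, huniq⟩
      fun y hs ht => stCost_single_add_edgeCorrection_le hs₀ ht₀ hs ht δ e₀
  rw [hA, hw]
  refine ⟨fun e he => edgeCorrection_eq_zero_of_not_mem y₀ δ e₀ he, ?_, hunique.1, hunique.2⟩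
  linarith [sum_abs_edgeCorrection_le s t y₀ δ e₀]

theorem stcut_dominating_set (n : ℕ) (s t : Fin n) (hst : s ≠ t) :
    ∃ A : (Fin n → Bool) × (Sym2 (Fin n) → ℝ) → (Sym2 (Fin n) → ℝ),
      ∀ w w' : Sym2 (Fin n) → ℝ, (∀ e, 0 ≤ w e) → (∀ e, 0 ≤ w' e) →
        NeighboringW n w w' →
        ∀ y₀ : Fin n → Bool, y₀ s = true → y₀ t = false →
        (∀ y : Fin n → Bool, y s = true → y t = false →
          stCost n w y₀ ≤ stCost n w y) →
        (∀ y : Fin n → Bool, y s = true → y t = false →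
          stCost n w y = stCost n w y₀ → y = y₀) →
        (∀ e, e ∉ terminalEdges n s t → A (y₀, w' - w) e = 0) ∧
        (∑ e : Sym2 (Fin n), |A (y₀, w' - w) e| ≤ 2) ∧
        (∀ y : Fin n → Bool, y s = true → y t = false →
          stCost n (fun e => w' e + A (y₀, w' - w) e) y₀
            ≤ stCost n (fun e => w' e + A (y₀, w' - w) e) y) ∧
        (∀ y : Fin n → Bool, y s = true → y t = false →
          stCost n (fun e => w' e + A (y₀, w' - w) e) y
            = stCost n (fun e => w' e + A (y₀, w' - w) e) y₀ → y = y₀) :=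
  stcut_dominating_set_general n s t
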